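/- arXiv:1806.09749 — 2 statements merged into one kernel-verified Lean document; each statement's English description precedes it below -/
import Mathlib

section
/- The principal branch of the Lambert W function satisfies W(x) = log x − log log x + o(1) as x → ∞; in particular, for every δ > 0 there exists x₀ such that for all x ≥ x₀, |W(x) − log x + log log x| ≤ δ. -/
/-- The principal branch of Lambert W satisfies `W(x) = log x − log log x + o(1)` as `x → ∞`:
for every `δ > 0` there is `x₀` such that for all `x ≥ x₀`,
`|W(x) − log x + log log x| ≤ δ`. -/
theorem stmt2 (W : ℝ → ℝ)
    (hW : ∀ x : ℝ, 0 < x → 0 < W x ∧ W x * Real.exp (W x) = x) :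
    ∀ δ : ℝ, 0 < δ → ∃ x₀ : ℝ, ∀ x : ℝ, x₀ ≤ x →
      |W x - Real.log x + Real.log (Real.log x)| ≤ δ := by
  intro δ hδ
  set M : ℝ := max 1 ((2/δ)^2) with hMdef
  refine ⟨M * Real.exp M + 1, ?_⟩
  intro x hx
  have hM1 : (1:ℝ) ≤ M := le_max_left _ _
  have hMsq : (2/δ)^2 ≤ M := le_max_right _ _
  have hexpM : 0 < Real.exp M := Real.exp_pos M
  have hx0 : 0 < x := by nlinarith
  obtain ⟨hWpos, hWeq⟩ := hW x hx0
  have hWM : M ≤ W x := by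
    by_contra h
    push_neg at h
    have h1 : Real.exp (W x) ≤ Real.exp M := (Real.exp_le_exp.mpr h.le)
    nlinarith
  have hW1 : (1:ℝ) ≤ W x := le_trans hM1 hWM
  have hlogx : Real.log x = Real.log (W x) + W x := by
    conv_lhs => rw [← hWeq]
    rw [Real.log_mul (by positivity) (Real.exp_ne_zero _), Real.log_exp]
  have hlogW : 0 ≤ Real.log (W x) := Real.log_nonneg hW1
  have hexpr : W x - Real.log x + Real.log (Real.log x) =
      Real.log ((Real.log (W x) + W x) / W x) := by
    rw [Real.log_div (by linarith) (by linarith), hlogx]; ring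
  have hrat1 : (1:ℝ) ≤ (Real.log (W x) + W x) / W x := by
    rw [le_div_iff₀ hWpos]; linarith
  rw [hexpr, abs_of_nonneg (Real.log_nonneg hrat1)]
  have h1 : Real.log ((Real.log (W x) + W x) / W x) ≤
      (Real.log (W x) + W x) / W x - 1 :=
    Real.log_le_sub_one_of_pos (by linarith)
  have h2 : (Real.log (W x) + W x) / W x - 1 = Real.log (W x) / W x := by
    field_simp
    ring
  -- bound log W ≤ 2 √W
  have hs0 : 0 < Real.sqrt (W x) := Real.sqrt_pos.mpr hWpos
  have hsq : Real.sqrt (W x) * Real.sqrt (W x) = W x :=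
    Real.mul_self_sqrt hWpos.le
  have hlog2 : Real.log (W x) = 2 * Real.log (Real.sqrt (W x)) := by
    have h := Real.log_mul hs0.ne' hs0.ne'
    rw [hsq] at h
    rw [h]; ring
  have h3 : Real.log (Real.sqrt (W x)) ≤ Real.sqrt (W x) - 1 :=
    Real.log_le_sub_one_of_pos hs0
  have h4 : Real.log (W x) ≤ 2 * Real.sqrt (W x) := by
    rw [hlog2]; linarith
  -- √W ≥ 2/δ
  have hs : 2/δ ≤ Real.sqrt (W x) := by
    have := Real.sqrt_le_sqrt (le_trans hMsq hWM)
    rwa [Real.sqrt_sq (by positivity)] at this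
  have h5 : Real.log (W x) / W x ≤ δ := by
    rw [div_le_iff₀ hWpos]
    have hδW : 2 / Real.sqrt (W x) ≤ δ := by
      rw [div_le_iff₀ hs0]
      calc (2:ℝ) = δ * (2/δ) := by field_simp
      _ ≤ δ * Real.sqrt (W x) := by nlinarith
    calc Real.log (W x) ≤ 2 * Real.sqrt (W x) := h4
    _ = (2 / Real.sqrt (W x)) * W x := by
        field_simp
        nlinarith
    _ ≤ δ * W x := by nlinarith
  linarith [h1, h2.le]
end

section
/- Let U(z) = ∫_{−1}^1 log|z−t| dv_α(t) be the logarithmic potential of the Ullman distribution v_α (α ≥ 2), F_α = log(1/2) − 1/α, and δ(z) = U(z) − F_α. Let q(ε) = μ·W((ρ^{−1/μ}/μ)·log(1/ε)) with μ = 1/λ − 1/α > 0, ρ = (β_α/2)(τλ)^{1/λ}e^μ, and let n(ε) = ⌊(1/q(ε))·log(1/ε)⌋. Then for any fixed c ≥ 1 and any choice z_ε with |z_ε| = c·r_{n(ε)}/a_{n(ε)}, one has lim_{ε→0} δ(z_ε)/q(ε) = 1; moreover for any fixed z with |z| = c, lim_{ε→0} δ(z)/q(ε) = 0. -/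
/-- The Ullman distribution density. -/
noncomputable def ullman (α : ℝ) (t : ℝ) : ℝ :=
  (α / Real.pi) * ∫ y in |t|..1, y ^ (α - 1) / Real.sqrt (y ^ 2 - t ^ 2)

/-- Logarithmic potential of the Ullman distribution. -/
noncomputable def Upot (α : ℝ) (z : ℂ) : ℝ :=
  ∫ t in (-1 : ℝ)..1, Real.log ‖z - (t : ℂ)‖ * ullman α t

/-- Modified Robin constant `F_α = log(1/2) − 1/α`. -/
noncomputable def Falpha (α : ℝ) : ℝ := Real.log (1 / 2) - 1 / α

/-- `δ(z) = U(z) − F_α`. -/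
noncomputable def deltaFn (α : ℝ) (z : ℂ) : ℝ := Upot α z - Falpha α

/-- Mhaskar–Rakhmanov–Saff constant. -/
noncomputable def betaA (α : ℝ) : ℝ :=
  (2 ^ (α - 2) * Real.Gamma (α / 2) ^ 2 / Real.Gamma α) ^ (1 / α)

noncomputable def aN (α : ℝ) (n : ℕ) : ℝ := betaA α * (n : ℝ) ^ (1 / α)

noncomputable def rN (τ lam : ℝ) (n : ℕ) : ℝ := ((n : ℝ) / (τ * lam)) ^ (1 / lam)

/-- `q(ε) = μ W((ρ^{−1/μ}/μ) log(1/ε))`. -/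
noncomputable def qFn (W : ℝ → ℝ) (ρ μ ε : ℝ) : ℝ :=
  μ * W ((ρ ^ (-(1 / μ)) / μ) * Real.log (1 / ε))

/-- `n(ε) = ⌊(1/q(ε)) log(1/ε)⌋`. -/
noncomputable def nFn (W : ℝ → ℝ) (ρ μ ε : ℝ) : ℕ :=
  ⌊Real.log (1 / ε) / qFn W ρ μ ε⌋₊


open MeasureTheory Real Set Filter intervalIntegral

lemma slice_image (y : ℝ) (hy : 0 < y) :
    (fun θ : ℝ => y * Real.sin θ) '' Ioo (-(π/2)) (π/2) = Ioo (-y) y := by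
  ext t
  simp only [mem_image, mem_Ioo]
  constructor
  · rintro ⟨θ, hθ, rfl⟩
    have h1 : Real.sin θ < 1 := by
      have := Real.strictMonoOn_sin ⟨le_of_lt hθ.1, le_of_lt hθ.2⟩
        ⟨by linarith [Real.pi_pos], le_refl _⟩ hθ.2
      simpa using this
    have h2 : -1 < Real.sin θ := by
      have := Real.strictMonoOn_sin (a := -(π/2)) (b := θ) ⟨le_refl _, by linarith [Real.pi_pos]⟩
        ⟨le_of_lt hθ.1, le_of_lt hθ.2⟩ hθ.1
      simpa using this
    constructor <;> nlinarith
  · rintro ⟨h1, h2⟩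
    have ha : -1 ≤ t / y := by rw [le_div_iff₀ hy]; linarith
    have hb : t / y ≤ 1 := by rw [div_le_one hy]; linarith
    refine ⟨Real.arcsin (t / y), ⟨?_, ?_⟩, ?_⟩
    · rw [neg_lt, ← Real.arcsin_neg]
      refine Real.arcsin_lt_pi_div_two.2 ?_
      have : -1 < t / y := by rw [lt_div_iff₀ hy]; linarith
      linarith
    · exact Real.arcsin_lt_pi_div_two.2 (by rw [div_lt_one hy]; linarith)
    · rw [Real.sin_arcsin ha hb]; field_simp

lemma slice_int (y : ℝ) (hy : 0 < y) :
    IntegrableOn (fun t : ℝ => (Real.sqrt (y^2 - t^2))⁻¹) (Ioo (-y) y) ∧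
    ∫ t in Ioo (-y) y, (Real.sqrt (y^2 - t^2))⁻¹ = π := by
  have hs : MeasurableSet (Ioo (-(π/2)) (π/2)) := measurableSet_Ioo
  have hf' : ∀ θ ∈ Ioo (-(π/2)) (π/2),
      HasDerivWithinAt (fun θ : ℝ => y * Real.sin θ) (y * Real.cos θ) (Ioo (-(π/2)) (π/2)) θ :=
    fun θ _ => ((Real.hasDerivAt_sin θ).const_mul y).hasDerivWithinAt
  have hinj : InjOn (fun θ : ℝ => y * Real.sin θ) (Ioo (-(π/2)) (π/2)) := by
    intro a ha b hb h
    have h' : Real.sin a = Real.sin b := mul_left_cancel₀ (ne_of_gt hy) h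
    exact Real.injOn_sin ⟨le_of_lt ha.1, le_of_lt ha.2⟩ ⟨le_of_lt hb.1, le_of_lt hb.2⟩ h'
  have key : ∀ θ ∈ Ioo (-(π/2)) (π/2),
      |y * Real.cos θ| • (Real.sqrt (y^2 - (y * Real.sin θ)^2))⁻¹ = 1 := by
    intro θ hθ
    have hcos : 0 < Real.cos θ := Real.cos_pos_of_mem_Ioo hθ
    have h1 : y^2 - (y * Real.sin θ)^2 = (y * Real.cos θ)^2 := by
      have := Real.sin_sq_add_cos_sq θ; nlinarith
    rw [h1, Real.sqrt_sq (by positivity), smul_eq_mul, abs_of_pos (by positivity)]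
    field_simp
  have himg := slice_image y hy
  constructor
  · rw [← himg, integrableOn_image_iff_integrableOn_abs_deriv_smul hs hf' hinj]
    refine IntegrableOn.congr_fun ?_ (fun θ hθ => (key θ hθ).symm) hs
    exact integrableOn_const measure_Ioo_lt_top.ne
  · rw [← himg, integral_image_eq_integral_abs_deriv_smul hs hf' hinj,
      setIntegral_congr_fun hs key]
    simp only [setIntegral_const, smul_eq_mul, mul_one, Real.volume_Ioo]
    rw [Real.volume_real_Ioo_of_le (by linarith [Real.pi_pos])]; ring

noncomputable def Gfun (α : ℝ) : ℝ × ℝ → ℝ :=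
  Set.indicator {q : ℝ × ℝ | |q.1| < q.2 ∧ q.2 ≤ 1}
    (fun q => q.2 ^ (α - 1) / Real.sqrt (q.2 ^ 2 - q.1 ^ 2))

lemma Gfun_meas (α : ℝ) : Measurable (Gfun α) := by
  apply Measurable.indicator
  · fun_prop
  · exact (measurableSet_lt (measurable_fst.abs) measurable_snd).inter
      (measurableSet_le measurable_snd measurable_const)

lemma Gfun_nonneg (α : ℝ) (p : ℝ × ℝ) : 0 ≤ Gfun α p := by
  unfold Gfun
  apply Set.indicator_nonneg
  intro q hq
  have h0 : (0:ℝ) ≤ q.2 := le_of_lt (lt_of_le_of_lt (abs_nonneg _) hq.1)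
  positivity

lemma Gfun_slice (α : ℝ) (y : ℝ) (hy : y ∈ Ioc (0:ℝ) 1) :
    (fun t => Gfun α (t, y)) =
      (Ioo (-y) y).indicator (fun t => y ^ (α - 1) * (Real.sqrt (y ^ 2 - t ^ 2))⁻¹) := by
  funext t
  simp only [Gfun, Set.indicator, mem_setOf_eq, mem_Ioo]
  by_cases h : |t| < y
  · rw [if_pos ⟨h, hy.2⟩, if_pos (abs_lt.1 h), div_eq_mul_inv]
  · rw [if_neg (fun hc => h hc.1), if_neg (fun hc => h (abs_lt.2 hc))]

lemma Gfun_slice_zero (α : ℝ) (y : ℝ) (hy : y ∉ Ioc (0:ℝ) 1) :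
    (fun t => Gfun α (t, y)) = (fun _ => (0:ℝ)) := by
  funext t
  simp only [Gfun, Set.indicator, mem_setOf_eq]
  rw [if_neg]
  rintro ⟨h1, h2⟩
  exact hy ⟨lt_of_le_of_lt (abs_nonneg t) h1, h2⟩

lemma Gfun_slice_integrable (α : ℝ) (y : ℝ) :
    Integrable (fun t => Gfun α (t, y)) := by
  by_cases hy : y ∈ Ioc (0:ℝ) 1
  · rw [Gfun_slice α y hy, integrable_indicator_iff measurableSet_Ioo]
    exact ((slice_int y hy.1).1.const_mul _)
  · rw [Gfun_slice_zero α y hy]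
    exact integrable_zero _ _ _

lemma Gfun_slice_integral (α : ℝ) (hα : 0 < α) (y : ℝ) :
    ∫ t, Gfun α (t, y) = (Ioc (0:ℝ) 1).indicator (fun y => π * y ^ (α - 1)) y := by
  by_cases hy : y ∈ Ioc (0:ℝ) 1
  · rw [Gfun_slice α y hy, Set.indicator_of_mem hy,
      MeasureTheory.integral_indicator measurableSet_Ioo, MeasureTheory.integral_const_mul, (slice_int y hy.1).2]
    ring
  · rw [Gfun_slice_zero α y hy, Set.indicator_of_notMem hy, MeasureTheory.integral_zero _ _]

lemma rpow_int_on : ∀ α : ℝ, 0 < α → IntegrableOn (fun y : ℝ => π * y ^ (α - 1)) (Ioc 0 1) := by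
  intro α hα
  have h := intervalIntegral.intervalIntegrable_rpow' (a := 0) (b := 1) (r := α - 1) (by linarith)
  rw [intervalIntegrable_iff_integrableOn_Ioc_of_le (by norm_num)] at h
  exact h.const_mul π

lemma rpow_int_val (α : ℝ) (hα : 0 < α) :
    ∫ y in Ioc (0:ℝ) 1, π * y ^ (α - 1) = π / α := by
  rw [MeasureTheory.integral_const_mul, ← intervalIntegral.integral_of_le (by norm_num : (0:ℝ) ≤ 1),
    integral_rpow (Or.inl (by linarith))]
  rw [Real.one_rpow, Real.zero_rpow (by linarith), sub_add_cancel]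
  field_simp
  ring

lemma Gfun_integrable (α : ℝ) (hα : 0 < α) :
    Integrable (Gfun α) (volume : Measure (ℝ × ℝ)) := by
  rw [Measure.volume_eq_prod]
  rw [integrable_prod_iff' (Gfun_meas α).aestronglyMeasurable]
  constructor
  · exact Eventually.of_forall (fun y => Gfun_slice_integrable α y)
  · have : (fun y => ∫ t, ‖Gfun α (t, y)‖) =
        (Ioc (0:ℝ) 1).indicator (fun y => π * y ^ (α - 1)) := by
      funext y
      rw [← Gfun_slice_integral α hα y]
      congr 1
      funext t
      exact Real.norm_of_nonneg (Gfun_nonneg α _)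
    rw [this, integrable_indicator_iff measurableSet_Ioc]
    exact rpow_int_on α hα

lemma Gfun_total (α : ℝ) (hα : 0 < α) :
    ∫ p, Gfun α p = π / α := by
  rw [Measure.volume_eq_prod, integral_prod_symm _ (by
    rw [← Measure.volume_eq_prod]; exact Gfun_integrable α hα)]
  have : ∀ y : ℝ, ∫ t, Gfun α (t, y) = (Ioc (0:ℝ) 1).indicator (fun y => π * y ^ (α - 1)) y :=
    Gfun_slice_integral α hα
  rw [funext this, MeasureTheory.integral_indicator measurableSet_Ioc]
  exact rpow_int_val α hα

noncomputable def marg (α : ℝ) (t : ℝ) : ℝ := ∫ y, Gfun α (t, y)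

lemma marg_nonneg (α : ℝ) (t : ℝ) : 0 ≤ marg α t :=
  integral_nonneg (fun y => Gfun_nonneg α _)

lemma marg_integrable (α : ℝ) (hα : 0 < α) : Integrable (marg α) := by
  have h := (Gfun_integrable α hα)
  rw [Measure.volume_eq_prod] at h
  exact h.integral_prod_left

lemma marg_total (α : ℝ) (hα : 0 < α) : ∫ t, marg α t = π / α := by
  have h := (Gfun_integrable α hα)
  rw [Measure.volume_eq_prod] at h
  rw [show (∫ t, marg α t) = ∫ t, ∫ y, Gfun α (t, y) from rfl,
    ← MeasureTheory.integral_prod _ h, ← Measure.volume_eq_prod]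
  exact Gfun_total α hα

lemma Gfun_yslice (α : ℝ) (t : ℝ) (ht : |t| < 1) :
    (fun y => Gfun α (t, y)) =
      (Ioc |t| 1).indicator (fun y => y ^ (α - 1) / Real.sqrt (y ^ 2 - t ^ 2)) := by
  funext y
  simp only [Gfun, Set.indicator, mem_setOf_eq, mem_Ioc]

lemma Gfun_yslice_zero (α : ℝ) (t : ℝ) (ht : 1 ≤ |t|) :
    (fun y => Gfun α (t, y)) = (fun _ => (0:ℝ)) := by
  funext y
  simp only [Gfun, Set.indicator, mem_setOf_eq]
  rw [if_neg]
  rintro ⟨h1, h2⟩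
  linarith

lemma marg_eq_ullman (α : ℝ) (hα : 0 < α) (t : ℝ) (ht : t ∈ Ioc (-1:ℝ) 1) :
    ullman α t = (α / π) * marg α t := by
  rcases eq_or_lt_of_le ht.2 with h1 | h1
  · have habs : |t| = 1 := by rw [h1]; simp
    rw [show marg α t = 0 by
      rw [show marg α t = ∫ y, Gfun α (t, y) from rfl, Gfun_yslice_zero α t (le_of_eq habs.symm),
        MeasureTheory.integral_zero]]
    rw [ullman, habs, intervalIntegral.integral_same, mul_zero]
  · have habs : |t| < 1 := abs_lt.2 ⟨by linarith [ht.1], h1⟩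
    rw [ullman, show marg α t = ∫ y, Gfun α (t, y) from rfl, Gfun_yslice α t habs,
      MeasureTheory.integral_indicator measurableSet_Ioc,
      ← intervalIntegral.integral_of_le (le_of_lt habs)]

lemma ullman_integral (α : ℝ) (hα : 0 < α) :
    IntegrableOn (ullman α) (Ioc (-1:ℝ) 1) ∧
    (∫ t in (-1:ℝ)..1, ullman α t = 1) ∧
    (∀ t ∈ Ioc (-1:ℝ) 1, 0 ≤ ullman α t) := by
  have hpi := Real.pi_pos
  have hcongr : EqOn (ullman α) (fun t => (α / π) * marg α t) (Ioc (-1:ℝ) 1) :=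
    fun t ht => marg_eq_ullman α hα t ht
  refine ⟨?_, ?_, ?_⟩
  · exact (((marg_integrable α hα).const_mul (α/π)).integrableOn).congr_fun
      (fun t ht => (hcongr ht).symm) measurableSet_Ioc
  · rw [intervalIntegral.integral_of_le (by norm_num : (-1:ℝ) ≤ 1),
      setIntegral_congr_fun measurableSet_Ioc hcongr, MeasureTheory.integral_const_mul,
      setIntegral_eq_integral_of_forall_compl_eq_zero (f := marg α) ?_, marg_total α hα]
    · field_simp
    · intro t ht
      simp only [mem_Ioc, not_and_or, not_lt, not_le] at ht
      have habs : 1 ≤ |t| := by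
        rcases ht with h | h
        · rw [abs_of_nonpos (by linarith)]; linarith
        · rw [abs_of_pos (by linarith)]; linarith
      rw [show marg α t = ∫ y, Gfun α (t, y) from rfl, Gfun_yslice_zero α t habs,
        MeasureTheory.integral_zero]
  · intro t ht
    rw [hcongr ht]
    exact mul_nonneg (by positivity) (marg_nonneg α t)

lemma Upot_close (α : ℝ) (hα : 0 < α) (z : ℂ) (hz : 2 ≤ ‖z‖) :
    |Upot α z - Real.log (‖z‖)| ≤ 2 / ‖z‖ := by
  obtain ⟨hu_int, hu_tot, hu_nn⟩ := ullman_integral α hα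
  set R := ‖z‖ with hR
  have hR2 : (2:ℝ) ≤ R := hz
  have hR0 : (0:ℝ) < R := by linarith
  set u := ullman α with hu
  set f : ℝ → ℝ := fun t => Real.log ‖z - (t : ℂ)‖ with hf
  -- bounds on |z - t| for |t| ≤ 1
  have habs_bounds : ∀ t : ℝ, |t| ≤ 1 → R - 1 ≤ ‖z - t‖ ∧ ‖z - t‖ ≤ R + 1 := by
    intro t ht
    have h1 : ‖(t:ℂ)‖ ≤ 1 := by rwa [Complex.norm_real, Real.norm_eq_abs]
    constructor
    · have := norm_sub_norm_le z (t:ℂ)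
      linarith
    · have := norm_sub_le z (t:ℂ)
      linarith
  have hf_bounds : ∀ t : ℝ, |t| ≤ 1 → |f t - Real.log R| ≤ 2 / R := by
    intro t ht
    obtain ⟨hlo, hhi⟩ := habs_bounds t ht
    have hpos : (0:ℝ) < R - 1 := by linarith
    have hub : f t - Real.log R ≤ 1 / R := by
      have h1 : f t ≤ Real.log (R + 1) := Real.log_le_log (by linarith) hhi
      have h2 : Real.log (R + 1) - Real.log R = Real.log ((R+1)/R) := by
        rw [Real.log_div (by linarith) (ne_of_gt hR0)]
      have h3 : Real.log ((R+1)/R) ≤ (R+1)/R - 1 :=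
        Real.log_le_sub_one_of_pos (by positivity)
      have h4 : (R+1)/R - 1 = 1/R := by field_simp; ring
      linarith
    have hlb : -(2 / R) ≤ f t - Real.log R := by
      have h1 : Real.log (R - 1) ≤ f t := Real.log_le_log hpos hlo
      have h2 : Real.log R - Real.log (R - 1) = Real.log (R/(R-1)) := by
        rw [Real.log_div (ne_of_gt hR0) (ne_of_gt hpos)]
      have h3 : Real.log (R/(R-1)) ≤ R/(R-1) - 1 :=
        Real.log_le_sub_one_of_pos (by positivity)
      have h4 : R/(R-1) - 1 = 1/(R-1) := by field_simp; ring
      have h5 : 1/(R-1) ≤ 2/R := by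
        rw [div_le_div_iff₀ (by linarith) hR0]; linarith
      linarith
    rw [abs_le]
    constructor
    · exact hlb
    · calc f t - Real.log R ≤ 1/R := hub
        _ ≤ 2/R := by apply div_le_div_of_nonneg_right <;> linarith
  -- integrability of f * u on Ioc (-1) 1
  have hf_meas : Measurable f :=
    Real.measurable_log.comp (continuous_norm.comp (by continuity : Continuous fun t : ℝ => z - (t:ℂ))).measurable
  have hfu_meas : AEStronglyMeasurable (fun t => f t * u t)
      (volume.restrict (Ioc (-1:ℝ) 1)) :=
    (hf_meas.aestronglyMeasurable.restrict).mul hu_int.aestronglyMeasurable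
  have hbound : ∀ t ∈ Ioc (-1:ℝ) 1, |t| ≤ 1 := by
    intro t ht; rw [abs_le]; exact ⟨le_of_lt ht.1, ht.2⟩
  have hfu_int : IntegrableOn (fun t => f t * u t) (Ioc (-1:ℝ) 1) := by
    apply Integrable.mono (hu_int.const_mul (Real.log R + 2/R)) hfu_meas
    rw [ae_restrict_iff' measurableSet_Ioc]
    refine Eventually.of_forall (fun t ht => ?_)
    have h1 := hf_bounds t (hbound t ht)
    have h2 := hu_nn t ht
    have h3 : |f t| ≤ Real.log R + 2/R := by
      have : (0:ℝ) ≤ Real.log R := Real.log_nonneg (by linarith)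
      rw [abs_le] at h1 ⊢
      constructor <;> [nlinarith; linarith [h1.2]]
    rw [Real.norm_eq_abs, Real.norm_eq_abs, abs_mul, abs_mul, abs_of_nonneg h2,
      abs_of_nonneg (by
        have : (0:ℝ) ≤ Real.log R := Real.log_nonneg (by linarith)
        positivity : (0:ℝ) ≤ Real.log R + 2/R)]
    exact mul_le_mul_of_nonneg_right h3 h2
  have hconst_int : IntegrableOn (fun t => Real.log R * u t) (Ioc (-1:ℝ) 1) :=
    hu_int.const_mul _
  have htot : ∫ t in Ioc (-1:ℝ) 1, u t = 1 := by
    rwa [intervalIntegral.integral_of_le (by norm_num : (-1:ℝ) ≤ 1)] at hu_tot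
  have hkey : Upot α z - Real.log R = ∫ t in Ioc (-1:ℝ) 1, (f t - Real.log R) * u t := by
    rw [show Upot α z = ∫ t in Ioc (-1:ℝ) 1, f t * u t by
      rw [Upot, intervalIntegral.integral_of_le (by norm_num : (-1:ℝ) ≤ 1)]]
    rw [show (fun t => (f t - Real.log R) * u t) = fun t => f t * u t - Real.log R * u t by
      funext t; ring]
    rw [MeasureTheory.integral_sub hfu_int hconst_int, MeasureTheory.integral_const_mul, htot,
      mul_one]
  rw [hkey, ← Real.norm_eq_abs]
  have : ‖∫ t in Ioc (-1:ℝ) 1, (f t - Real.log R) * u t‖ ≤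
      ∫ t in Ioc (-1:ℝ) 1, (2/R) * u t := by
    apply MeasureTheory.norm_integral_le_of_norm_le (hu_int.const_mul (2/R))
    rw [ae_restrict_iff' measurableSet_Ioc]
    refine Eventually.of_forall (fun t ht => ?_)
    rw [Real.norm_eq_abs, abs_mul, abs_of_nonneg (hu_nn t ht)]
    exact mul_le_mul_of_nonneg_right (hf_bounds t (hbound t ht)) (hu_nn t ht)
  rw [MeasureTheory.integral_const_mul, htot, mul_one] at this
  exact this

open Filter in
lemma W_tendsto_atTop (W : ℝ → ℝ) (hW : ∀ x : ℝ, 0 < x → 0 < W x ∧ W x * Real.exp (W x) = x) :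
    Tendsto W atTop atTop := by
  rw [tendsto_atTop]
  intro b
  set b' := max b 1 with hb'
  have hb'1 : (1:ℝ) ≤ b' := le_max_right _ _
  filter_upwards [eventually_ge_atTop (max 1 (b' * Real.exp b' + 1))] with x hx
  have hx0 : (0:ℝ) < x := lt_of_lt_of_le one_pos (le_trans (le_max_left _ _) hx)
  obtain ⟨hW0, hWe⟩ := hW x hx0
  by_contra h
  push_neg at h
  have hWb : W x ≤ b' := le_trans h.le (le_max_left _ _)
  have hxle : x ≤ b' * Real.exp b' := by
    rw [← hWe]
    exact mul_le_mul hWb (Real.exp_le_exp.2 hWb) (le_of_lt (Real.exp_pos _)) (by linarith)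
  linarith [le_trans (le_max_right 1 (b' * Real.exp b' + 1)) hx]

/-- For `|z_ε| = c r_{n(ε)}/a_{n(ε)}`, `δ(z_ε)/q(ε) → 1` as `ε → 0⁺`; for any fixed `z`
with `|z| = c`, `δ(z)/q(ε) → 0`. -/
theorem stmt14 (α τ lam μ ρ : ℝ) (hα : 2 ≤ α) (hτ : 0 < τ) (hlam : 0 < lam)
    (hlt : lam < α) (hμ : μ = 1 / lam - 1 / α)
    (hρdef : ρ = betaA α / 2 * (τ * lam) ^ (1 / lam) * Real.exp μ)
    (W : ℝ → ℝ) (hW : ∀ x : ℝ, 0 < x → 0 < W x ∧ W x * Real.exp (W x) = x)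
    (c : ℝ) (hc : 1 ≤ c) :
    (∀ zfn : ℝ → ℂ,
      (∀ ε ∈ Set.Ioo (0 : ℝ) 1,
        ‖zfn ε‖ = c * rN τ lam (nFn W ρ μ ε) / aN α (nFn W ρ μ ε)) →
      Filter.Tendsto (fun ε => deltaFn α (zfn ε) / qFn W ρ μ ε)
        (nhdsWithin 0 (Set.Ioi 0)) (nhds 1)) ∧
    (∀ z : ℂ, ‖z‖ = c →
      Filter.Tendsto (fun ε => deltaFn α z / qFn W ρ μ ε)
        (nhdsWithin 0 (Set.Ioi 0)) (nhds 0)) := by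
  
  -- positivity preliminaries
  have hα0 : (0:ℝ) < α := by linarith
  have hc0 : (0:ℝ) < c := by linarith
  have hμ0 : 0 < μ := by
    rw [hμ]
    have h1 : 1 / α < 1 / lam := one_div_lt_one_div_of_lt hlam hlt
    linarith
  have hΓ1 : 0 < Real.Gamma (α/2) := Real.Gamma_pos_of_pos (by linarith)
  have hΓ2 : 0 < Real.Gamma α := Real.Gamma_pos_of_pos hα0
  have hβ0 : 0 < betaA α := by
    rw [betaA]
    apply Real.rpow_pos_of_pos
    have h2 : (0:ℝ) < (2:ℝ) ^ (α - 2) := Real.rpow_pos_of_pos two_pos _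
    positivity
  have htl : 0 < τ * lam := mul_pos hτ hlam
  have htlp : (0:ℝ) < (τ * lam) ^ (1/lam) := Real.rpow_pos_of_pos htl _
  have hρ0 : 0 < ρ := by rw [hρdef]; positivity
  set l := nhdsWithin (0:ℝ) (Set.Ioi 0) with hl
  set L : ℝ → ℝ := fun ε => Real.log (1/ε) with hL
  set x : ℝ → ℝ := fun ε => (ρ ^ (-(1/μ)) / μ) * L ε with hx
  have hcoef : 0 < ρ ^ (-(1/μ)) / μ := div_pos (Real.rpow_pos_of_pos hρ0 _) hμ0
  have hq_def : ∀ ε, qFn W ρ μ ε = μ * W (x ε) := fun ε => rfl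
  set v : ℝ → ℝ := fun ε => L ε / qFn W ρ μ ε with hv
  have hn_def : ∀ ε, nFn W ρ μ ε = ⌊v ε⌋₊ := fun ε => rfl
  have hev1 : Set.Ioo (0:ℝ) 1 ∈ l := Ioo_mem_nhdsGT_of_mem ⟨le_refl 0, zero_lt_one⟩
  -- pointwise facts on (0,1)
  have hL_pos : ∀ ε ∈ Set.Ioo (0:ℝ) 1, 0 < L ε := by
    intro ε hε
    exact Real.log_pos (one_lt_one_div hε.1 hε.2)
  have hx_pos : ∀ ε ∈ Set.Ioo (0:ℝ) 1, 0 < x ε := fun ε hε => mul_pos hcoef (hL_pos ε hε)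
  have hq_pos : ∀ ε ∈ Set.Ioo (0:ℝ) 1, 0 < qFn W ρ μ ε := by
    intro ε hε
    rw [hq_def]
    exact mul_pos hμ0 (hW _ (hx_pos ε hε)).1
  have hrpow1 : ρ ^ (-(1/μ)) * ρ ^ (1/μ:ℝ) = 1 := by
    rw [← Real.rpow_add hρ0]; norm_num
  have hv_eq : ∀ ε ∈ Set.Ioo (0:ℝ) 1, v ε = ρ ^ (1/μ:ℝ) * Real.exp (W (x ε)) := by
    intro ε hε
    obtain ⟨hW0, hWe⟩ := hW _ (hx_pos ε hε)
    have hLx : L ε = x ε * μ * ρ ^ (1/μ:ℝ) := by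
      have h2 : x ε * μ * ρ ^ (1/μ:ℝ) = (ρ ^ (-(1/μ)) * ρ ^ (1/μ:ℝ)) * (L ε * (μ / μ)) := by
        rw [hx]; ring
      rw [h2, hrpow1, div_self (ne_of_gt hμ0)]; ring
    have hxW : x ε / W (x ε) = Real.exp (W (x ε)) := by
      nth_rewrite 1 [← hWe]
      exact mul_div_cancel_left₀ _ (ne_of_gt hW0)
    rw [hv]
    show L ε / qFn W ρ μ ε = _
    rw [hLx, hq_def, ← hxW]
    field_simp
  have hμlogv : ∀ ε ∈ Set.Ioo (0:ℝ) 1,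
      μ * Real.log (v ε) = Real.log ρ + qFn W ρ μ ε := by
    intro ε hε
    obtain ⟨hW0, _⟩ := hW _ (hx_pos ε hε)
    rw [hv_eq ε hε, Real.log_mul (ne_of_gt (Real.rpow_pos_of_pos hρ0 _)) (Real.exp_ne_zero _),
      Real.log_rpow hρ0, Real.log_exp, hq_def]
    field_simp
  -- tendsto facts
  have htL : Filter.Tendsto L l atTop := by
    have h1 : Filter.Tendsto (fun ε : ℝ => ε⁻¹) l atTop := tendsto_inv_nhdsGT_zero
    have := Real.tendsto_log_atTop.comp h1
    refine this.congr (fun ε => ?_)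
    simp [hL, one_div]
  have htx : Filter.Tendsto x l atTop := Filter.Tendsto.const_mul_atTop hcoef htL
  have htW : Filter.Tendsto (fun ε => W (x ε)) l atTop := (W_tendsto_atTop W hW).comp htx
  have htq : Filter.Tendsto (fun ε => qFn W ρ μ ε) l atTop := by
    simp only [hq_def]
    exact Filter.Tendsto.const_mul_atTop hμ0 htW
  have htv : Filter.Tendsto v l atTop := by
    apply Filter.Tendsto.congr' (Filter.eventuallyEq_of_mem hev1 (fun ε hε => (hv_eq ε hε).symm))
    exact Filter.Tendsto.const_mul_atTop (Real.rpow_pos_of_pos hρ0 _)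
      (Real.tendsto_exp_atTop.comp htW)
  have htn : Filter.Tendsto (fun ε => ((nFn W ρ μ ε : ℕ) : ℝ)) l atTop := by
    simp only [hn_def]
    exact tendsto_natCast_atTop_atTop.comp (tendsto_nat_floor_atTop.comp htv)
  have htnv : Filter.Tendsto (fun ε => ((nFn W ρ μ ε : ℕ) : ℝ) / v ε) l (nhds 1) := by
    simp only [hn_def]
    exact tendsto_nat_floor_div_atTop.comp htv
  have hevn1 : ∀ᶠ ε in l, (1:ℝ) ≤ ((nFn W ρ μ ε : ℕ) : ℝ) := htn.eventually (eventually_ge_atTop 1)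
  have htD : Filter.Tendsto
      (fun ε => μ * (Real.log ((nFn W ρ μ ε : ℕ) : ℝ) - Real.log (v ε))) l (nhds 0) := by
    have h1 : Filter.Tendsto (fun ε => Real.log (((nFn W ρ μ ε : ℕ) : ℝ) / v ε)) l (nhds 0) := by
      have := (Real.continuousAt_log one_ne_zero).tendsto.comp htnv
      simpa [Function.comp_def] using this
    have h2 := h1.const_mul μ
    rw [mul_zero] at h2
    apply h2.congr'
    filter_upwards [hev1, hevn1] with ε hε hn1
    have hnpos : (0:ℝ) < ((nFn W ρ μ ε : ℕ) : ℝ) := lt_of_lt_of_le one_pos hn1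
    have hvpos : 0 < v ε := div_pos (hL_pos ε hε) (hq_pos ε hε)
    rw [Real.log_div (ne_of_gt hnpos) (ne_of_gt hvpos)]
  constructor
  · -- main part
    intro zfn hzfn
    set D : ℝ → ℝ := fun ε => μ * (Real.log ((nFn W ρ μ ε : ℕ) : ℝ) - Real.log (v ε)) with hD
    have hlogR : ∀ᶠ ε in l, Real.log (‖zfn ε‖) =
        qFn W ρ μ ε + (Real.log c - Real.log 2 + μ) + D ε := by
      filter_upwards [hev1, hevn1] with ε hε hn1
      have hnpos : (0:ℝ) < ((nFn W ρ μ ε : ℕ) : ℝ) := lt_of_lt_of_le one_pos hn1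
      have hrN : 0 < rN τ lam (nFn W ρ μ ε) := Real.rpow_pos_of_pos (div_pos hnpos htl) _
      have haN : 0 < aN α (nFn W ρ μ ε) := mul_pos hβ0 (Real.rpow_pos_of_pos hnpos _)
      have hR : ‖zfn ε‖ = c * rN τ lam (nFn W ρ μ ε) / aN α (nFn W ρ μ ε) :=
        hzfn ε hε
      have hlog1 : Real.log (‖zfn ε‖) =
          Real.log c + Real.log (rN τ lam (nFn W ρ μ ε)) - Real.log (aN α (nFn W ρ μ ε)) := by
        rw [hR, Real.log_div (by positivity) (ne_of_gt haN),
          Real.log_mul (ne_of_gt hc0) (ne_of_gt hrN)]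
      have hlog2 : Real.log (rN τ lam (nFn W ρ μ ε)) =
          (1/lam) * Real.log ((nFn W ρ μ ε : ℕ) : ℝ) - (1/lam) * Real.log (τ*lam) := by
        rw [rN, Real.log_rpow (div_pos hnpos htl),
          Real.log_div (ne_of_gt hnpos) (ne_of_gt htl)]
        ring
      have hlog3 : Real.log (aN α (nFn W ρ μ ε)) =
          Real.log (betaA α) + (1/α) * Real.log ((nFn W ρ μ ε : ℕ) : ℝ) := by
        rw [aN, Real.log_mul (ne_of_gt hβ0) (ne_of_gt (Real.rpow_pos_of_pos hnpos _)),
          Real.log_rpow hnpos]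
      have hlogρ : Real.log ρ =
          Real.log (betaA α) - Real.log 2 + (1/lam) * Real.log (τ*lam) + μ := by
        rw [hρdef, Real.log_mul (by positivity) (Real.exp_ne_zero _),
          Real.log_mul (by positivity) (ne_of_gt htlp), Real.log_exp,
          Real.log_div (ne_of_gt hβ0) two_ne_zero, Real.log_rpow htl]
      have hμlogn : μ * Real.log ((nFn W ρ μ ε : ℕ) : ℝ) =
          Real.log ρ + qFn W ρ μ ε + D ε := by
        simp only [hD]
        linear_combination hμlogv ε hε
      have hμsplit : (1/lam) * Real.log ((nFn W ρ μ ε : ℕ) : ℝ)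
          - (1/α) * Real.log ((nFn W ρ μ ε : ℕ) : ℝ)
          = μ * Real.log ((nFn W ρ μ ε : ℕ) : ℝ) := by rw [hμ]; ring
      rw [hlog1, hlog2, hlog3]
      linarith
    have htlogR : Filter.Tendsto (fun ε => Real.log (‖zfn ε‖)) l atTop := by
      apply Filter.Tendsto.congr' (hlogR.mono (fun ε h => h.symm))
      have h1 : Filter.Tendsto (fun ε => (Real.log c - Real.log 2 + μ) + D ε) l
          (nhds ((Real.log c - Real.log 2 + μ) + 0)) := tendsto_const_nhds.add htD
      exact (htq.atTop_add h1).congr (fun ε => by ring)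
    have htR : Filter.Tendsto (fun ε => ‖zfn ε‖) l atTop := by
      apply Filter.Tendsto.congr' ?_ (Real.tendsto_exp_atTop.comp htlogR)
      filter_upwards [hev1, hevn1] with ε hε hn1
      have hnpos : (0:ℝ) < ((nFn W ρ μ ε : ℕ) : ℝ) := lt_of_lt_of_le one_pos hn1
      have hrN : 0 < rN τ lam (nFn W ρ μ ε) := Real.rpow_pos_of_pos (div_pos hnpos htl) _
      have haN : 0 < aN α (nFn W ρ μ ε) := mul_pos hβ0 (Real.rpow_pos_of_pos hnpos _)
      have hRpos : 0 < ‖zfn ε‖ := by rw [hzfn ε hε]; positivity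
      exact (Real.exp_log hRpos)
    set E : ℝ → ℝ := fun ε => Upot α (zfn ε) - Real.log (‖zfn ε‖) with hE
    have htE : Filter.Tendsto E l (nhds 0) := by
      apply squeeze_zero_norm' (a := fun ε => 2 / ‖zfn ε‖)
      · filter_upwards [htR.eventually (eventually_ge_atTop 2)] with ε h2
        rw [hE, Real.norm_eq_abs]
        exact Upot_close α hα0 (zfn ε) h2
      · exact Filter.Tendsto.div_atTop tendsto_const_nhds htR
    set C : ℝ := Real.log c + μ + 1/α with hC
    have hδ_eq : ∀ᶠ ε in l, deltaFn α (zfn ε) = qFn W ρ μ ε + (C + D ε + E ε) := by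
      filter_upwards [hlogR] with ε hlog
      rw [deltaFn, Falpha, hE]
      simp only
      have hlog12 : Real.log (1/2) = - Real.log 2 := by
        rw [one_div, Real.log_inv]
      rw [hlog12]
      rw [hC]
      have : Upot α (zfn ε) = (Upot α (zfn ε) - Real.log (‖zfn ε‖))
        + Real.log (‖zfn ε‖) := by ring
      rw [this, hlog]
      ring
    have htg : Filter.Tendsto (fun ε => C + D ε + E ε) l (nhds (C + 0 + 0)) :=
      (tendsto_const_nhds.add htD).add htE
    have hfrac : Filter.Tendsto (fun ε => (C + D ε + E ε) / qFn W ρ μ ε) l (nhds 0) :=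
      Filter.Tendsto.div_atTop htg htq
    have hgoal : Filter.Tendsto (fun ε => 1 + (C + D ε + E ε) / qFn W ρ μ ε) l (nhds 1) := by
      have := tendsto_const_nhds (α := ℝ) (x := (1:ℝ)) (f := l) |>.add hfrac
      simpa using this
    apply hgoal.congr'
    filter_upwards [hev1, hδ_eq] with ε hε hδ
    have hq := hq_pos ε hε
    rw [hδ]
    field_simp
  · -- second part
    intro z hz
    exact Filter.Tendsto.div_atTop tendsto_const_nhds htq
end
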